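/- arXiv:1503.00323 — 3 statements merged into one kernel-verified Lean document; each statement's English description precedes it below -/
import Mathlib

section
/- Let H be an inner product space, z_1, …, z_n ∈ H with ⟨z_i, z_i⟩ = C > 0 for all i, and z̄ = (1/n) Σ_i z_i. For an index set I ⊆ [n], let S_I = span{z_i : i ∈ I}, let z_I = P_{S_I} z̄ be the orthogonal projection of z̄ onto S_I, and define the incoherence ν_I = min_{j ∉ I} max_{i ∈ I} ⟨z_i, z_j⟩. Then ‖z̄ − z_I‖ ≤ (1 − |I|/n) · sqrt((C² − ν_I²)/C). -/
open RealInnerProductSpace Finset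

/-!
For each `j ∉ I`, pick `i ∈ I` maximizing `⟪z i, z j⟫ =: μ`; the residual of `z j` after
projecting onto the line through `z i` has squared norm `(C² - μ²)/C ≤ (C² - ν²)/C`.
Replacing every `z j` with `j ∉ I` in the mean by that line projection gives a point of the
span of `{z i | i ∈ I}` within `(1 - |I|/n) · √((C² - ν²)/C)` of `z̄`, and the orthogonal
projection is at least as close.
-/

namespace Submodule

variable {𝕜 E : Type*} [RCLike 𝕜] [NormedAddCommGroup E] [InnerProductSpace 𝕜 E]

theorem norm_sub_starProjection_le {K : Submodule 𝕜 E} [K.HasOrthogonalProjection] (x : E)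
    {v : E} (hv : v ∈ K) : ‖x - K.starProjection x‖ ≤ ‖x - v‖ := by
  rw [starProjection_minimal]
  exact ciInf_le ⟨0, by rintro _ ⟨w, rfl⟩; positivity⟩ (⟨v, hv⟩ : K)

end Submodule

section

variable {H : Type*} [NormedAddCommGroup H] [InnerProductSpace ℝ H]

theorem norm_sub_inner_div_smul_sq {x y : H} {C : ℝ} (hC : C ≠ 0) (hx : ⟪x, x⟫ = C)
    (hy : ⟪y, y⟫ = C) : ‖y - (⟪x, y⟫ / C) • x‖ ^ 2 = (C ^ 2 - ⟪x, y⟫ ^ 2) / C := by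
  rw [← real_inner_self_eq_norm_sq, inner_sub_sub_self, real_inner_smul_left,
    real_inner_smul_right, real_inner_smul_left, real_inner_smul_right, hx, hy, real_inner_comm]
  field_simp
  ring

theorem norm_sub_inner_div_smul_le {x y : H} {C ν : ℝ} (hC : 0 < C) (hx : ⟪x, x⟫ = C)
    (hy : ⟪y, y⟫ = C) (hν0 : 0 ≤ ν) (hν : ν ≤ ⟪x, y⟫) :
    ‖y - (⟪x, y⟫ / C) • x‖ ≤ √((C ^ 2 - ν ^ 2) / C) := by
  rw [← Real.sqrt_sq (norm_nonneg _), norm_sub_inner_div_smul_sq hC.ne' hx hy]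
  gcongr

theorem norm_sub_starProjection_average_le {ι : Type*} [Fintype ι] [DecidableEq ι]
    (K : Submodule ℝ H) [K.HasOrthogonalProjection] (z w : ι → H) (I : Finset ι)
    (hzI : ∀ i ∈ I, z i ∈ K) (hwK : ∀ j ∈ Iᶜ, w j ∈ K) {B : ℝ}
    (hzw : ∀ j ∈ Iᶜ, ‖z j - w j‖ ≤ B) :
    ‖(Fintype.card ι : ℝ)⁻¹ • ∑ i, z i -
        K.starProjection ((Fintype.card ι : ℝ)⁻¹ • ∑ i, z i)‖ ≤
      #Iᶜ / Fintype.card ι * B := by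
  set n : ℝ := (Fintype.card ι : ℝ)
  set v := n⁻¹ • (∑ i ∈ I, z i + ∑ j ∈ Iᶜ, w j)
  have hvK : v ∈ K :=
    K.smul_mem _ (K.add_mem (K.sum_mem hzI) (K.sum_mem hwK))
  have hdiff : n⁻¹ • ∑ i, z i - v = n⁻¹ • ∑ j ∈ Iᶜ, (z j - w j) := by
    rw [← smul_sub, ← sum_add_sum_compl I z, sum_sub_distrib]
    abel_nf
  calc _ ≤ ‖n⁻¹ • ∑ i, z i - v‖ := Submodule.norm_sub_starProjection_le _ hvK
    _ = n⁻¹ * ‖∑ j ∈ Iᶜ, (z j - w j)‖ := by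
      rw [hdiff, norm_smul, norm_inv, Real.norm_natCast]
    _ ≤ n⁻¹ * (#Iᶜ * B) := by
      gcongr
      exact (norm_sum_le _ _).trans <| by simpa using sum_le_card_nsmul _ _ _ hzw
    _ = #Iᶜ / n * B := by ring

end

/-- Incoherence-based sparse approximation bound for the sample mean:
`‖z̄ − z_I‖ ≤ (1 − |I|/n) · sqrt((C² − ν_I²)/C)`. -/
theorem incoherence_bound
    {H : Type*} [NormedAddCommGroup H] [InnerProductSpace ℝ H] {n : ℕ}
    (z : Fin n → H) (C : ℝ) (hC : 0 < C) (hnorm : ∀ i, ⟪z i, z i⟫ = C)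
    (I : Finset (Fin n)) (hI : I.Nonempty) (hIc : Iᶜ.Nonempty)
    (ν : ℝ) (hν : ν = Iᶜ.inf' hIc fun j => I.sup' hI fun i => ⟪z i, z j⟫)
    (hν0 : 0 ≤ ν)
    (zbar : H) (hzbar : zbar = (n : ℝ)⁻¹ • ∑ i, z i) :
    haveI : FiniteDimensional ℝ (Submodule.span ℝ (z '' ↑I)) :=
      FiniteDimensional.span_of_finite ℝ ((I.finite_toSet).image z)
    ‖zbar - (Submodule.orthogonalProjectionOnto (Submodule.span ℝ (z '' ↑I)) zbar : H)‖ ≤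
      (1 - (I.card : ℝ) / n) * Real.sqrt ((C ^ 2 - ν ^ 2) / C) := by
  set K := Submodule.span ℝ (z '' ↑I)
  have : FiniteDimensional ℝ K := .span_of_finite ℝ ((I.finite_toSet).image z)
  have hzK : ∀ i ∈ I, z i ∈ K := fun i hi => Submodule.subset_span ⟨i, hi, rfl⟩
  choose g hgI hg using fun j => exists_mem_eq_sup' hI fun i => ⟪z i, z j⟫
  have hνg : ∀ j ∈ Iᶜ, ν ≤ ⟪z (g j), z j⟫ := fun j hj => hν ▸ hg j ▸ inf'_le _ hj
  have hn : (n : ℝ) ≠ 0 := Nat.cast_ne_zero.mpr (Fin.pos_iff_nonempty.mpr ⟨hI.choose⟩).ne'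
  have hcard : (#Iᶜ : ℝ) / n = 1 - #I / n := by
    rw [card_compl, Fintype.card_fin, Nat.cast_sub (card_le_univ I |>.trans_eq
      (Fintype.card_fin n)), sub_div, div_self hn]
  rw [← Submodule.starProjection_apply, ← hcard, hzbar]
  simpa only [Fintype.card_fin] using norm_sub_starProjection_average_le K z (fun j => (⟪z (g j), z j⟫ / C) • z (g j)) I
    hzK (fun j _ => K.smul_mem _ (hzK _ (hgI j)))
    fun j hj => norm_sub_inner_div_smul_le hC (hnorm _) (hnorm j) hν0 (hνg j hj)
end

section
/- Let K be an n×n symmetric positive semidefinite Gram matrix K = (⟨z_i, z_j⟩) of vectors z_1,…,z_n in an inner product space, I ⊆ [n] with K_I = Q_I^T K Q_I invertible (Q_I the column-selection matrix), and let 1_n ∈ ℝ^n be the vector with all entries 1/n. Then ‖z̄ − z_I‖² = 1_n^T (K − K Q_I K_I^{-1} Q_I^T K^T) 1_n, where z̄ = (1/n)Σ z_i and z_I is the best approximation of z̄ from span{z_i : i ∈ I}. -/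
/-!
Writing `z̄ - z_I = ∑ (1ₙ - Q α)ᵢ zᵢ`, its squared norm is the quadratic form of the Gram
matrix `K` at `1ₙ - Q α`. The coefficients `α` solve the normal equations
`K_I α = Qᵀ K 1ₙ`, so the cross term and the quadratic term at `Q α` coincide and the form
collapses to `1ₙᵀ K 1ₙ - (Q α)ᵀ K 1ₙ`; the subtracted term is the Nyström form at `1ₙ`.
-/

open RealInnerProductSpace Finset Matrix

theorem sum_mulVec_selection_smul {ι κ R M : Type*} [Fintype ι] [Fintype κ] [DecidableEq ι]
    [Semiring R] [AddCommMonoid M] [Module R M] (f : κ → ι) (α : κ → R) (z : ι → M) :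
    ∑ i, ((fun i j => if i = f j then 1 else 0 : Matrix ι κ R) *ᵥ α) i • z i =
      ∑ j, α j • z (f j) := by
  simp only [mulVec, dotProduct, ite_mul, one_mul, zero_mul, sum_smul, ite_smul, zero_smul]
  rw [sum_comm]
  simp

theorem real_inner_sum_smul_sum_smul {ι H : Type*} [Fintype ι] [NormedAddCommGroup H]
    [InnerProductSpace ℝ H] (z : ι → H) (a b : ι → ℝ) :
    ⟪∑ i, a i • z i, ∑ i, b i • z i⟫ = a ⬝ᵥ (gram ℝ z *ᵥ b) := by
  simpa using (star_dotProduct_gram_mulVec z a b).symm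

namespace Matrix

variable {R n m : Type*} [CommRing R] [Fintype n] [Fintype m]

theorem dotProduct_mulVec_sub_of_normal_eq {K : Matrix n n R} (hK : Kᵀ = K) (Q : Matrix n m R)
    {u : n → R} {α : m → R} (hα : (Qᵀ * K * Q) *ᵥ α = Qᵀ *ᵥ (K *ᵥ u)) :
    (u - Q *ᵥ α) ⬝ᵥ (K *ᵥ (u - Q *ᵥ α)) = u ⬝ᵥ (K *ᵥ u) - (Q *ᵥ α) ⬝ᵥ (K *ᵥ u) := by
  have hsymm : ∀ v w : n → R, v ⬝ᵥ (K *ᵥ w) = w ⬝ᵥ (K *ᵥ v) := fun v w => by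
    conv_lhs => rw [← hK]
    exact dotProduct_transpose_mulVec K v w
  have hadj : ∀ y, (Q *ᵥ α) ⬝ᵥ y = α ⬝ᵥ (Qᵀ *ᵥ y) := fun y => by
    rw [dotProduct_transpose_mulVec, dotProduct_comm]
  have hproj : (Q *ᵥ α) ⬝ᵥ (K *ᵥ (Q *ᵥ α)) = (Q *ᵥ α) ⬝ᵥ (K *ᵥ u) := by
    rw [hadj, hadj, mulVec_mulVec, mulVec_mulVec, hα]
  rw [mulVec_sub, dotProduct_sub, sub_dotProduct, sub_dotProduct, hproj, hsymm u (Q *ᵥ α)]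
  ring

theorem dotProduct_mul_mul_transpose_mulVec {l : Type*} [Fintype l] (K : Matrix n l R)
    (Q : Matrix l m R) (M : Matrix m m R) (u : n → R) :
    u ⬝ᵥ ((K * Q * M * Qᵀ * Kᵀ) *ᵥ u) = (Q *ᵥ (M *ᵥ (Qᵀ *ᵥ (Kᵀ *ᵥ u)))) ⬝ᵥ (Kᵀ *ᵥ u) := by
  simp only [← mulVec_mulVec]
  exact (dotProduct_transpose_mulVec K _ u).symm

end Matrix

/-- Nyström identity: `‖z̄ − z_I‖² = 1ₙᵀ (K − K Q_I K_I⁻¹ Q_Iᵀ Kᵀ) 1ₙ`, where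
`K Q_I K_I⁻¹ Q_Iᵀ Kᵀ` is the Nyström approximation of the Gram matrix `K`. -/
theorem nystrom_identity
    {H : Type*} [NormedAddCommGroup H] [InnerProductSpace ℝ H] {n : ℕ}
    (z : Fin n → H) (zbar : H) (hzbar : zbar = (n : ℝ)⁻¹ • ∑ i, z i)
    (K : Matrix (Fin n) (Fin n) ℝ) (hK : K = fun i j => ⟪z i, z j⟫)
    (I : Finset (Fin n))
    (Q : Matrix (Fin n) I ℝ) (hQ : Q = fun i j => if i = j.1 then 1 else 0)
    (KI : Matrix I I ℝ) (hKI : KI = Qᵀ * K * Q)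
    (hKIinv : IsUnit KI.det)
    (one_n : Fin n → ℝ) (hone : one_n = fun _ => (n : ℝ)⁻¹)
    (αI : I → ℝ) (hα : αI = KI⁻¹ *ᵥ (Qᵀ *ᵥ (K *ᵥ one_n)))
    (zI : H) (hzI : zI = ∑ i : I, αI i • z i.1) :
    ‖zbar - zI‖ ^ 2 = one_n ⬝ᵥ ((K - K * Q * KI⁻¹ * Qᵀ * Kᵀ) *ᵥ one_n) := by
  replace hK : K = gram ℝ z := hK
  have hKsymm : Kᵀ = K := hK ▸ isHermitian_gram ℝ z
  have hnormal : (Qᵀ * K * Q) *ᵥ αI = Qᵀ *ᵥ (K *ᵥ one_n) := by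
    rw [← hKI, hα, mulVec_mulVec, mul_nonsing_inv _ hKIinv, one_mulVec]
  have hresidual : zbar - zI = ∑ i, (one_n - Q *ᵥ αI) i • z i := by
    simp only [Pi.sub_apply, sub_smul, sum_sub_distrib, hQ, sum_mulVec_selection_smul, hzI,
      hzbar, hone, smul_sum]
  rw [← real_inner_self_eq_norm_sq, hresidual, real_inner_sum_smul_sum_smul, ← hK,
    dotProduct_mulVec_sub_of_normal_eq hKsymm Q hnormal, sub_mulVec, dotProduct_sub,
    dotProduct_mul_mul_transpose_mulVec, hKsymm, hα]
end

section
/- The greedy farthest-point algorithm for the k-center problem is a 2-approximation: given a finite metric space with points x_1, …, x_n and k ≤ n, the set X of k centers produced by iteratively adding the point farthest from the current set satisfies W(X) ≤ 2 · W(X*), where X* is an optimal set of k centers and W(X) = max_j min_{x∈X} d(x_j, x). -/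
open Finset

/-- The `k`-center objective of a set `S` of centers with respect to the point
set `P`: the largest distance from a point of `P` to its nearest center. -/
noncomputable def kcenterCost {X : Type*} [MetricSpace X] (P S : Finset X)
    (hP : P.Nonempty) (hS : S.Nonempty) : ℝ :=
  P.sup' hP fun p => S.inf' hS fun c => dist p c

/-- Gonzalez' greedy farthest-point algorithm is a 2-approximation for the
`k`-center problem: if the centers `c 0, …, c (k−1)` are chosen from `P` so that
each `c m` is farthest from the previously chosen centers, then the resulting
cost is at most twice the cost of any set of `k` centers chosen from `P`
(in particular, of an optimal one). -/
theorem greedy_kcenter_two_approx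
    {X : Type*} [MetricSpace X] [DecidableEq X] (P : Finset X) (hP : P.Nonempty)
    (k : ℕ) (hk : 0 < k) (hkP : k ≤ P.card)
    (c : Fin k → X) (hmem : ∀ i, c i ∈ P)
    (hgreedy : ∀ (m : Fin k)
      (hprev : (((Finset.univ.filter fun i : Fin k => i < m)).image c).Nonempty),
      ∀ p ∈ P,
        (((Finset.univ.filter fun i : Fin k => i < m)).image c).inf'
            hprev (fun q => dist p q) ≤
          (((Finset.univ.filter fun i : Fin k => i < m)).image c).inf'
            hprev (fun q => dist (c m) q))
    (hX : (Finset.univ.image c).Nonempty) :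
    ∀ T ⊆ P, T.card = k → ∀ hT : T.Nonempty,
      kcenterCost P (Finset.univ.image c) hP hX ≤ 2 * kcenterCost P T hP hT := by
  intro T hTP hTcard hT
  set r := kcenterCost P T hP hT with hr
  have hnear : ∀ y ∈ P, ∃ t ∈ T, dist y t ≤ r := by
    intro y hy
    obtain ⟨t, ht, hte⟩ := Finset.exists_mem_eq_inf' hT (fun c => dist y c)
    refine ⟨t, ht, ?_⟩
    rw [← hte]
    exact Finset.le_sup' (fun p => T.inf' hT fun c => dist p c) hy
  apply Finset.sup'_le
  intro p hp
  set y : Fin (k+1) → X := fun i => if h : (i : ℕ) < k then c ⟨i, h⟩ else p with hy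
  have hymem : ∀ i, y i ∈ P := by
    intro i; simp only [hy]; split
    · exact hmem _
    · exact hp
  choose ψ hψT hψd using fun i => hnear (y i) (hymem i)
  obtain ⟨a, -, b, -, hab, heq⟩ :=
    Finset.exists_ne_map_eq_of_card_lt_of_maps_to
      (s := (Finset.univ : Finset (Fin (k+1)))) (t := T)
      (by simp [hTcard]) (fun i _ => hψT i)
  obtain ⟨i, j, hij, hψij⟩ : ∃ i j : Fin (k+1), i < j ∧ ψ i = ψ j := by
    rcases lt_or_gt_of_ne hab with h | h
    · exact ⟨a, b, h, heq⟩
    · exact ⟨b, a, h, heq.symm⟩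
  have hdij : dist (y i) (y j) ≤ 2 * r := by
    calc dist (y i) (y j) ≤ dist (y i) (ψ i) + dist (ψ i) (y j) := dist_triangle _ _ _
      _ ≤ r + r := add_le_add (hψd i) (by rw [hψij, dist_comm]; exact hψd j)
      _ = 2 * r := by ring
  have hijn : (i : ℕ) < (j : ℕ) := hij
  by_cases hjk : (j : ℕ) < k
  · set i' : Fin k := ⟨i, lt_trans hijn hjk⟩ with hi'
    set j' : Fin k := ⟨j, hjk⟩ with hj'
    have hyi : y i = c i' := dif_pos _
    have hyj : y j = c j' := dif_pos hjk
    have hmemprev : c i' ∈ ((Finset.univ.filter fun t : Fin k => t < j')).image c := by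
      apply Finset.mem_image_of_mem
      simp [Fin.lt_def, hi', hj', hijn]
    have hprev : (((Finset.univ.filter fun t : Fin k => t < j')).image c).Nonempty :=
      ⟨c i', hmemprev⟩
    have h1 := hgreedy j' hprev p hp
    have h2 : (((Finset.univ.filter fun t : Fin k => t < j')).image c).inf' hprev
        (fun q => dist (c j') q) ≤ dist (c j') (c i') := Finset.inf'_le _ hmemprev
    have h3 : (Finset.univ.image c).inf' hX (fun q => dist p q) ≤
        (((Finset.univ.filter fun t : Fin k => t < j')).image c).inf' hprev
          (fun q => dist p q) := by
      apply Finset.inf'_mono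
      exact Finset.image_subset_image (Finset.filter_subset _ _)
    rw [hyi, hyj] at hdij
    rw [dist_comm] at hdij
    linarith
  · have hjeq : (j : ℕ) = k := le_antisymm (Nat.lt_succ_iff.mp j.isLt) (not_lt.mp hjk)
    have hik : (i : ℕ) < k := by omega
    have hyi : y i = c ⟨i, hik⟩ := dif_pos _
    have hyj : y j = p := dif_neg hjk
    have hmemc : c ⟨i, hik⟩ ∈ Finset.univ.image c := Finset.mem_image_of_mem _ (Finset.mem_univ _)
    have := Finset.inf'_le (fun q => dist p q) hmemc
    rw [hyi, hyj, dist_comm] at hdij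
    calc (Finset.univ.image c).inf' hX (fun q => dist p q) ≤ dist p (c ⟨i, hik⟩) := this
      _ ≤ 2 * r := hdij
end
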